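/- arXiv:1406.4897 — 2 statements merged into one kernel-verified Lean document; each statement's English description precedes it below -/
import Mathlib

section
/- Let G be a group and H ◁ G of finite index. For an endomorphism φ of the forgetful functor on C and g ∈ G define φ_g = Inf_H^G(r_H^G(δ̂_{g⁻¹} φ)) where δ̂_g(π) = π(g). Then φ decomposes as φ = Σ_{g ∈ G/H} δ̂_g φ_g; in particular for every induced representation Π = Ind_H^G π, one has φ(Π) = Σ_{s,t ∈ G/H} p_{ts⁻¹} φ(Π) p_t summed appropriately, which equals φ(Π) since Σ_g p_g = Id. -/
noncomputable section

open scoped TensorProduct DirectSum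

universe u

section Defs

variable {G : Type u} [Group G]

/-- The submodule of equivariant linear maps between two representations. -/
def equivHom {M : Type*} [Monoid M] {V₁ V₂ : Type*}
    [AddCommGroup V₁] [Module ℂ V₁] [AddCommGroup V₂] [Module ℂ V₂]
    (ρ₁ : Representation ℂ M V₁) (ρ₂ : Representation ℂ M V₂) :
    Submodule ℂ (V₁ →ₗ[ℂ] V₂) where
  carrier := {f | ∀ (m : M) (v : V₁), f (ρ₁ m v) = ρ₂ m (f v)}
  add_mem' := by intro a b ha hb m v; simp_all
  zero_mem' := by intro m v; simp
  smul_mem' := by intro c f hf m v; simp_all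

instance equivHom.instAddCommGroup {M : Type*} [Monoid M] {V₁ V₂ : Type*}
    [AddCommGroup V₁] [Module ℂ V₁] [AddCommGroup V₂] [Module ℂ V₂]
    (ρ₁ : Representation ℂ M V₁) (ρ₂ : Representation ℂ M V₂) :
    AddCommGroup ↥(equivHom ρ₁ ρ₂) :=
  Submodule.addCommGroup _

instance equivHom.instModule {M : Type*} [Monoid M] {V₁ V₂ : Type*}
    [AddCommGroup V₁] [Module ℂ V₁] [AddCommGroup V₂] [Module ℂ V₂]
    (ρ₁ : Representation ℂ M V₁) (ρ₂ : Representation ℂ M V₂) :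
    Module ℂ ↥(equivHom ρ₁ ρ₂) :=
  Submodule.module _

/-- Twist of a representation by a `ℂˣ`-valued character. -/
def twist {V : Type*} [AddCommGroup V] [Module ℂ V]
    (ρ : Representation ℂ G V) (χ : G →* ℂˣ) : Representation ℂ G V where
  toFun g := (χ g : ℂ) • ρ g
  map_one' := by simp
  map_mul' g₁ g₂ := by
    ext v
    simp [Module.End.mul_apply, LinearMap.smul_apply, map_mul, smul_smul,
      map_smul, mul_comm, mul_left_comm]

@[simp] lemma twist_apply {V : Type*} [AddCommGroup V] [Module ℂ V]
    (ρ : Representation ℂ G V) (χ : G →* ℂˣ) (g : G) (v : V) :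
    twist ρ χ g v = (χ g : ℂ) • ρ g v := rfl

/-- Characters of `G` trivial on `H`, i.e. characters of `G/H`. -/
def TrivOn (H : Subgroup G) : Type u := {χ : G →* ℂˣ // ∀ h ∈ H, χ h = 1}

/-- Irreducibility of a representation. -/
def IsIrreducibleRep {M : Type*} [Monoid M] {V : Type*} [AddCommGroup V] [Module ℂ V]
    (ρ : Representation ℂ M V) : Prop :=
  (∃ v : V, v ≠ 0) ∧
    ∀ W : Submodule ℂ V, (∀ (m : M) (v : V), v ∈ W → ρ m v ∈ W) → W = ⊥ ∨ W = ⊤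

/-- Equivalence (isomorphism) of representations. -/
def RepEquiv {M : Type*} [Monoid M] {V₁ V₂ : Type*}
    [AddCommGroup V₁] [Module ℂ V₁] [AddCommGroup V₂] [Module ℂ V₂]
    (ρ₁ : Representation ℂ M V₁) (ρ₂ : Representation ℂ M V₂) : Prop :=
  ∃ e : V₁ ≃ₗ[ℂ] V₂, ∀ (m : M) (v : V₁), e (ρ₁ m v) = ρ₂ m (e v)

/-- Restriction of a representation of `G` to a subgroup `H`. -/
def resR (H : Subgroup G) {V : Type*} [AddCommGroup V] [Module ℂ V]
    (ρ : Representation ℂ G V) : Representation ℂ H V := ρ.comp H.subtype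

@[simp] lemma resR_apply (H : Subgroup G) {V : Type*} [AddCommGroup V] [Module ℂ V]
    (ρ : Representation ℂ G V) (h : H) : resR H ρ h = ρ ↑h := rfl

end Defs
section Ind

variable {G : Type u} [Group G] (H : Subgroup G)
variable {V : Type u} [AddCommGroup V] [Module ℂ V]

/-- The space of the induced representation: functions `w : G → V` with
`w (h * g) = ρ h (w g)` for `h ∈ H`. -/
def IndSpace (ρ : Representation ℂ H V) : Submodule ℂ (G → V) where
  carrier := {w | ∀ (h : H) (g : G), w (↑h * g) = ρ h (w g)}
  add_mem' := by intro a b ha hb h g; simp_all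
  zero_mem' := by intro h g; simp
  smul_mem' := by intro c a ha h g; simp_all

/-- The induced representation `Ind_H^G ρ`, acting by right translation. -/
def indRep (ρ : Representation ℂ H V) : Representation ℂ G ↥(IndSpace H ρ) where
  toFun g :=
    { toFun := fun w => ⟨fun x => (w : G → V) (x * g), by
        intro h x
        have := w.2 h (x * g)
        simpa [mul_assoc] using this⟩
      map_add' := by intro a b; apply Subtype.ext; funext x; simp
      map_smul' := by intro c a; apply Subtype.ext; funext x; simp }
  map_one' := by
    apply LinearMap.ext; intro w; apply Subtype.ext; funext x; simp
  map_mul' := by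
    intro g₁ g₂
    apply LinearMap.ext; intro w; apply Subtype.ext; funext x
    simp [Module.End.mul_apply, mul_assoc]

@[simp] lemma indRep_apply (ρ : Representation ℂ H V) (g : G) (w : ↥(IndSpace H ρ)) (x : G) :
    ((indRep H ρ g w : ↥(IndSpace H ρ)) : G → V) x = (w : G → V) (x * g) := rfl

/-- Evaluation at `g` of functions in the induced representation. -/
def evalAt (ρ : Representation ℂ H V) (g : G) : ↥(IndSpace H ρ) →ₗ[ℂ] V where
  toFun w := (w : G → V) g
  map_add' := by intro a b; simp
  map_smul' := by intro c a; simp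

@[simp] lemma evalAt_apply (ρ : Representation ℂ H V) (g : G) (w : ↥(IndSpace H ρ)) :
    evalAt H ρ g w = (w : G → V) g := rfl

/-- Extension by zero: the section `e_g^*` of `evalAt`, supported on the coset `H g`. -/
def extAt [DecidablePred (· ∈ H)] (ρ : Representation ℂ H V) (g : G) :
    V →ₗ[ℂ] ↥(IndSpace H ρ) where
  toFun v := ⟨fun x => if hx : x * g⁻¹ ∈ H then ρ ⟨x * g⁻¹, hx⟩ v else 0, by
    intro h x
    dsimp only
    by_cases hx : x * g⁻¹ ∈ H
    · have hx' : (↑h * x) * g⁻¹ ∈ H := by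
        have e : (↑h * x) * g⁻¹ = ↑h * (x * g⁻¹) := by group
        rw [e]; exact H.mul_mem h.2 hx
      rw [dif_pos hx', dif_pos hx]
      have e2 : (⟨(↑h * x) * g⁻¹, hx'⟩ : H) = h * ⟨x * g⁻¹, hx⟩ := by
        apply Subtype.ext; simp [mul_assoc]
      rw [e2, map_mul]
      rfl
    · have hx' : ¬ ((↑h * x) * g⁻¹ ∈ H) := by
        intro hc
        apply hx
        have e : x * g⁻¹ = (↑h)⁻¹ * ((↑h * x) * g⁻¹) := by group
        rw [e]; exact H.mul_mem (H.inv_mem h.2) hc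
      rw [dif_neg hx', dif_neg hx, map_zero]⟩
  map_add' := by
    intro a b; apply Subtype.ext; funext x
    by_cases hx : x * g⁻¹ ∈ H <;> simp [hx]
  map_smul' := by
    intro c a; apply Subtype.ext; funext x
    by_cases hx : x * g⁻¹ ∈ H <;> simp [hx]

/-- The projector `p_g = e_g^* ∘ e_g` onto functions supported on `H g`. -/
def projAt [DecidablePred (· ∈ H)] (ρ : Representation ℂ H V) (g : G) :
    ↥(IndSpace H ρ) →ₗ[ℂ] ↥(IndSpace H ρ) :=
  extAt H ρ g ∘ₗ evalAt H ρ g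

/-- Functoriality of induction on `H`-equivariant maps. -/
def indMap {V₁ V₂ : Type u} [AddCommGroup V₁] [Module ℂ V₁] [AddCommGroup V₂] [Module ℂ V₂]
    (ρ₁ : Representation ℂ H V₁) (ρ₂ : Representation ℂ H V₂)
    (α : V₁ →ₗ[ℂ] V₂) (hα : ∀ (h : H) (v : V₁), α (ρ₁ h v) = ρ₂ h (α v)) :
    ↥(IndSpace H ρ₁) →ₗ[ℂ] ↥(IndSpace H ρ₂) where
  toFun w := ⟨fun x => α ((w : G → V₁) x), by
    intro h x
    dsimp only
    rw [w.2 h x, hα]⟩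
  map_add' := by intro a b; apply Subtype.ext; funext x; simp
  map_smul' := by intro c a; apply Subtype.ext; funext x; simp

/-- Conjugate representation `π^g`, given by `h ↦ π (g⁻¹ h g)`. -/
def conjRep [hN : H.Normal] (ρ : Representation ℂ H V) (g : G) : Representation ℂ H V :=
  ρ.comp
    { toFun := fun h => ⟨g⁻¹ * ↑h * g, by simpa using hN.conj_mem ↑h h.2 g⁻¹⟩
      map_one' := by apply Subtype.ext; simp
      map_mul' := by
        intro a b; apply Subtype.ext
        show g⁻¹ * ↑(a * b) * g = (g⁻¹ * ↑a * g) * (g⁻¹ * ↑b * g)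
        rw [Subgroup.coe_mul]; group }

@[simp] lemma conjRep_apply [H.Normal] (ρ : Representation ℂ H V) (g : G) (h : H) (v : V) :
    conjRep H ρ g h v = ρ ⟨g⁻¹ * ↑h * g, by simpa using ‹H.Normal›.conj_mem ↑h h.2 g⁻¹⟩ v := rfl

attribute [irreducible] indRep

end Ind
section Bundled

/-- A bundled (complex, linear) representation of a group `M`. -/
structure RepOn (M : Type u) [Group M] : Type (u + 1) where
  V : Type u
  [acg : AddCommGroup V]
  [mod : Module ℂ V]
  ρ : Representation ℂ M V

attribute [instance] RepOn.acg RepOn.mod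

variable {G : Type u} [Group G]

/-- The bundled induced representation. -/
def indRepOn (H : Subgroup G) (σ : RepOn ↥H) : RepOn G :=
  { V := ↥(IndSpace H σ.ρ), ρ := indRep H σ.ρ }

/-- The bundled restriction to a subgroup. -/
def resRepOn (H : Subgroup G) (P : RepOn G) : RepOn ↥H :=
  { V := P.V, ρ := resR H P.ρ }

/-- The bundled twist by a character trivial on `H`. -/
def twistRepOn {H : Subgroup G} (P : RepOn G) (χ : TrivOn H) : RepOn G :=
  { V := P.V, ρ := twist P.ρ χ.1 }

/-- A family of endomorphisms (one for each bundled representation) commuting with all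
intertwiners between members of `C`: an endomorphism of the forgetful functor on `C`. -/
def Commutes {M : Type u} [Group M] (C : Set (RepOn M))
    (φ : ∀ π : RepOn M, π.V →ₗ[ℂ] π.V) : Prop :=
  ∀ π₁ ∈ C, ∀ π₂ ∈ C, ∀ α : π₁.V →ₗ[ℂ] π₂.V,
    (∀ m : M, α ∘ₗ π₁.ρ m = π₂.ρ m ∘ₗ α) → α ∘ₗ φ π₁ = φ π₂ ∘ₗ α

/-- Commutation with all `H`-intertwiners between members of `C` (support in `H`). -/
def HCommutes (H : Subgroup G) (C : Set (RepOn G))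
    (φ : ∀ π : RepOn G, π.V →ₗ[ℂ] π.V) : Prop :=
  ∀ π₁ ∈ C, ∀ π₂ ∈ C, ∀ α : π₁.V →ₗ[ℂ] π₂.V,
    (∀ h : H, α ∘ₗ π₁.ρ ↑h = π₂.ρ ↑h ∘ₗ α) → α ∘ₗ φ π₁ = φ π₂ ∘ₗ α

/-- The direct sum of a family of bundled representations. -/
def dsumRepOn {M : Type u} [Group M] {ι : Type u} [DecidableEq ι] (f : ι → RepOn M) :
    RepOn M where
  V := ⨁ i, (f i).V
  ρ :=
    { toFun := fun m => DFinsupp.mapRange.linearMap (fun i => (f i).ρ m)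
      map_one' := by
        have : (fun i => (f i).ρ (1 : M)) = fun i => (LinearMap.id : (f i).V →ₗ[ℂ] (f i).V) := by
          funext i; rw [map_one]; rfl
        try dsimp only
        rw [this, DFinsupp.mapRange.linearMap_id]
        rfl
      map_mul' := by
        intro m₁ m₂
        have : (fun i => (f i).ρ (m₁ * m₂)) =
            fun i => ((f i).ρ m₁) ∘ₗ ((f i).ρ m₂) := by
          funext i; rw [map_mul]; rfl
        try dsimp only
        rw [this, DFinsupp.mapRange.linearMap_comp]
        rfl }

/-- Closure of a class of representations under subobjects, quotients and direct sums. -/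
def ClosedRep {M : Type u} [Group M] (C : Set (RepOn M)) : Prop :=
  (∀ P ∈ C, ∀ σ : RepOn M, (∃ f : σ.V →ₗ[ℂ] P.V, Function.Injective f ∧
      ∀ (m : M) (v : σ.V), f (σ.ρ m v) = P.ρ m (f v)) → σ ∈ C) ∧
  (∀ P ∈ C, ∀ σ : RepOn M, (∃ f : P.V →ₗ[ℂ] σ.V, Function.Surjective f ∧
      ∀ (m : M) (v : P.V), f (P.ρ m v) = σ.ρ m (f v)) → σ ∈ C) ∧
  (∀ (ι : Type u) (_ : DecidableEq ι) (f : ι → RepOn M),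
      (∀ i, f i ∈ C) → dsumRepOn f ∈ C)

/-- The Fourier transform of a finitely supported function at a representation. -/
def fourierT {M : Type u} [Group M] (f : M →₀ ℂ) {V : Type*} [AddCommGroup V] [Module ℂ V]
    (ρ : Representation ℂ M V) : V →ₗ[ℂ] V :=
  f.sum fun g c => c • (ρ g : V →ₗ[ℂ] V)

end Bundled

/-!
Every `P` embeds `G`-equivariantly into `Π = Ind_H^G (P|_H)` by `ι v = (x ↦ P(x) v)`, and
`e₁ ∘ ι = id`, so `φ(P) = e₁ ∘ φ(Π) ∘ ι`. Splitting `ι = ∑_g e_g^* ∘ P(g)` along the support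
projectors and writing `e_g^* ∘ P(g) = λ_g ∘ e₁^*` with the left translations
`(λ_g w)(x) = P(g) w(g⁻¹ x)`, which are `G`-endomorphisms of `Π` because `H` is normal, `φ(Π)`
can be moved past `λ_g`; then `e₁ ∘ λ_g = P(g) ∘ e₁ ∘ Π(g⁻¹)`. The second identity is just
`∑_g p_g = Id`, applied once on each side of `φ(Π)`.
-/

section InducedRepresentation

variable {G : Type u} [Group G] (H : Subgroup G) {V : Type u} [AddCommGroup V] [Module ℂ V]

lemma extAt_apply_coe [DecidablePred (· ∈ H)] (ρ : Representation ℂ H V) (g : G) (v : V)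
    (x : G) :
    (extAt H ρ g v : G → V) x = if hx : x * g⁻¹ ∈ H then ρ ⟨x * g⁻¹, hx⟩ v else 0 :=
  rfl

lemma projAt_apply_coe [DecidablePred (· ∈ H)] (ρ : Representation ℂ H V) (g : G)
    (w : IndSpace H ρ) (x : G) :
    (projAt H ρ g w : G → V) x = if x * g⁻¹ ∈ H then (w : G → V) x else 0 := by
  rw [projAt, LinearMap.comp_apply, extAt_apply_coe, evalAt_apply]
  split_ifs with hx
  · rw [← w.2 ⟨x * g⁻¹, hx⟩ g]
    simp
  · rfl

lemma sum_projAt_eq_id [H.Normal] [Fintype (G ⧸ H)] [DecidablePred (· ∈ H)]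
    (ρ : Representation ℂ H V) (f : G ⧸ H → G)
    (hf : Function.Bijective fun q => (f q : G ⧸ H)) :
    ∑ q, projAt H ρ (f q) = LinearMap.id := by
  classical
  ext w x
  rw [LinearMap.sum_apply, Submodule.coe_sum, Finset.sum_apply]
  simp only [projAt_apply_coe, ← div_eq_mul_inv, ← QuotientGroup.eq_iff_div_mem]
  rw [hf.sum_comp (fun q => if (x : G ⧸ H) = q then (w : G → V) x else 0)]
  simp

lemma sum_projAt_eq_id_of_mk_eq [H.Normal] [Fintype (G ⧸ H)] [DecidablePred (· ∈ H)]
    (ρ : Representation ℂ H V) (R : G ⧸ H → G) (hR : ∀ q, (R q : G ⧸ H) = q) :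
    ∑ q, projAt H ρ (R q) = LinearMap.id :=
  sum_projAt_eq_id H ρ R (by simp only [hR]; exact Function.bijective_id)

lemma eq_sum_projAt_comp_comp_projAt [H.Normal] [Fintype (G ⧸ H)] [DecidablePred (· ∈ H)]
    (ρ : Representation ℂ H V) (R : G ⧸ H → G) (hR : ∀ q, (R q : G ⧸ H) = q)
    (T : IndSpace H ρ →ₗ[ℂ] IndSpace H ρ) :
    T = ∑ x, ∑ y, projAt H ρ (R y * (R x)⁻¹) ∘ₗ T ∘ₗ projAt H ρ (R y) := by
  have hsum (y : G ⧸ H) : ∑ x, projAt H ρ (R y * (R x)⁻¹) = LinearMap.id := by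
    refine sum_projAt_eq_id H ρ _ ?_
    simp only [QuotientGroup.mk_mul, QuotientGroup.mk_inv, hR]
    exact ((Equiv.inv _).trans (Equiv.mulLeft y)).bijective
  calc T = T ∘ₗ ∑ y, projAt H ρ (R y) := by
        rw [sum_projAt_eq_id_of_mk_eq H ρ R hR, LinearMap.comp_id]
    _ = ∑ y, (∑ x, projAt H ρ (R y * (R x)⁻¹)) ∘ₗ T ∘ₗ projAt H ρ (R y) := by
        ext w
        simp [hsum, LinearMap.sum_apply]
    _ = ∑ x, ∑ y, projAt H ρ (R y * (R x)⁻¹) ∘ₗ T ∘ₗ projAt H ρ (R y) := by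
        rw [Finset.sum_comm]
        ext w
        simp [LinearMap.sum_apply]

def toIndRes (ρ : Representation ℂ G V) : V →ₗ[ℂ] IndSpace H (resR H ρ) where
  toFun v := ⟨fun x => ρ x v, fun h x => by simp [map_mul]⟩
  map_add' a b := by ext; simp
  map_smul' c a := by ext; simp

@[simp] lemma toIndRes_apply_coe (ρ : Representation ℂ G V) (v : V) (x : G) :
    (toIndRes H ρ v : G → V) x = ρ x v :=
  rfl

lemma evalAt_comp_toIndRes (ρ : Representation ℂ G V) (g : G) :
    evalAt H (resR H ρ) g ∘ₗ toIndRes H ρ = ρ g :=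
  rfl

lemma toIndRes_comp (ρ : Representation ℂ G V) (g : G) :
    toIndRes H ρ ∘ₗ ρ g = indRep H (resR H ρ) g ∘ₗ toIndRes H ρ := by
  ext v x
  simp [← Module.End.mul_apply, ← map_mul]

lemma toIndRes_eq_sum [H.Normal] [Fintype (G ⧸ H)] [DecidablePred (· ∈ H)]
    (ρ : Representation ℂ G V) (R : G ⧸ H → G) (hR : ∀ q, (R q : G ⧸ H) = q) :
    toIndRes H ρ = ∑ q, extAt H (resR H ρ) (R q) ∘ₗ ρ (R q) := by
  calc toIndRes H ρ = (∑ q, projAt H (resR H ρ) (R q)) ∘ₗ toIndRes H ρ := by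
        rw [sum_projAt_eq_id_of_mk_eq H _ R hR, LinearMap.id_comp]
    _ = ∑ q, extAt H (resR H ρ) (R q) ∘ₗ ρ (R q) := by
        ext v
        simp only [LinearMap.comp_apply, LinearMap.sum_apply]
        rfl

def leftTranslate [H.Normal] (ρ : Representation ℂ G V) (g : G) :
    IndSpace H (resR H ρ) →ₗ[ℂ] IndSpace H (resR H ρ) where
  toFun w := ⟨fun x => ρ g ((w : G → V) (g⁻¹ * x)), fun h x => by
    have hconj : g⁻¹ * h * g ∈ H := by simpa using ‹H.Normal›.conj_mem h h.2 g⁻¹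
    calc ρ g ((w : G → V) (g⁻¹ * (h * x)))
        = ρ g ((w : G → V) ((⟨g⁻¹ * h * g, hconj⟩ : H) * (g⁻¹ * x))) := by
          simp [mul_assoc]
      _ = ρ g (ρ (g⁻¹ * h * g) ((w : G → V) (g⁻¹ * x))) := by
          rw [w.2]; rfl
      _ = ρ h (ρ g ((w : G → V) (g⁻¹ * x))) := by
          simp only [← Module.End.mul_apply, ← map_mul]; group⟩
  map_add' a b := by ext; simp
  map_smul' c a := by ext; simp

@[simp] lemma leftTranslate_apply_coe [H.Normal] (ρ : Representation ℂ G V) (g : G)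
    (w : IndSpace H (resR H ρ)) (x : G) :
    (leftTranslate H ρ g w : G → V) x = ρ g ((w : G → V) (g⁻¹ * x)) :=
  rfl

lemma leftTranslate_comp_indRep [H.Normal] (ρ : Representation ℂ G V) (g a : G) :
    leftTranslate H ρ g ∘ₗ indRep H (resR H ρ) a =
      indRep H (resR H ρ) a ∘ₗ leftTranslate H ρ g := by
  ext w x
  simp [mul_assoc]

lemma leftTranslate_comp_extAt_one [H.Normal] [DecidablePred (· ∈ H)]
    (ρ : Representation ℂ G V) (g : G) :
    leftTranslate H ρ g ∘ₗ extAt H (resR H ρ) 1 = extAt H (resR H ρ) g ∘ₗ ρ g := by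
  ext v x
  simp only [LinearMap.comp_apply, leftTranslate_apply_coe, extAt_apply_coe, inv_one, mul_one]
  have hmem : g⁻¹ * x ∈ H ↔ x * g⁻¹ ∈ H := ‹H.Normal›.mem_comm_iff
  by_cases hx : x * g⁻¹ ∈ H
  · rw [dif_pos (hmem.mpr hx), dif_pos hx]
    simp [← Module.End.mul_apply, ← map_mul]
  · rw [dif_neg (mt hmem.mp hx), dif_neg hx, map_zero]

lemma evalAt_one_comp_leftTranslate [H.Normal] (ρ : Representation ℂ G V) (g : G) :
    evalAt H (resR H ρ) 1 ∘ₗ leftTranslate H ρ g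
      = ρ g ∘ₗ evalAt H (resR H ρ) 1 ∘ₗ indRep H (resR H ρ) g⁻¹ := by
  ext w
  simp

lemma evalAt_one_comp_comp_toIndRes_eq_sum [H.Normal] [Fintype (G ⧸ H)] [DecidablePred (· ∈ H)]
    (ρ : Representation ℂ G V) (R : G ⧸ H → G) (hR : ∀ q, (R q : G ⧸ H) = q)
    (T : IndSpace H (resR H ρ) →ₗ[ℂ] IndSpace H (resR H ρ))
    (hT : ∀ g, leftTranslate H ρ g ∘ₗ T = T ∘ₗ leftTranslate H ρ g) :
    evalAt H (resR H ρ) 1 ∘ₗ T ∘ₗ toIndRes H ρ =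
      ∑ q, ρ (R q) ∘ₗ (evalAt H (resR H ρ) 1 ∘ₗ indRep H (resR H ρ) (R q)⁻¹ ∘ₗ T ∘ₗ
        extAt H (resR H ρ) 1) := by
  have hterm (g : G) (v : V) : evalAt H (resR H ρ) 1 (T (extAt H (resR H ρ) g (ρ g v))) =
      ρ g (evalAt H (resR H ρ) 1 (indRep H (resR H ρ) g⁻¹ (T (extAt H (resR H ρ) 1 v)))) := by
    calc evalAt H (resR H ρ) 1 (T (extAt H (resR H ρ) g (ρ g v)))
        = evalAt H (resR H ρ) 1 (T (leftTranslate H ρ g (extAt H (resR H ρ) 1 v))) := by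
          rw [← LinearMap.comp_apply (leftTranslate H ρ g), leftTranslate_comp_extAt_one]
          rfl
      _ = evalAt H (resR H ρ) 1 (leftTranslate H ρ g (T (extAt H (resR H ρ) 1 v))) :=
          congr(evalAt H (resR H ρ) 1 $(LinearMap.congr_fun (hT g) _)).symm
      _ = ρ g (evalAt H (resR H ρ) 1 (indRep H (resR H ρ) g⁻¹ (T (extAt H (resR H ρ) 1 v)))) :=
          LinearMap.congr_fun (evalAt_one_comp_leftTranslate H ρ g) _
  rw [toIndRes_eq_sum H ρ R hR]
  ext v
  simp only [LinearMap.comp_apply, LinearMap.sum_apply, map_sum]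
  exact Finset.sum_congr rfl fun q _ => hterm (R q) v

end InducedRepresentation

theorem statement17_general {G : Type u} [Group G] (H : Subgroup G) [H.Normal] [Fintype (G ⧸ H)]
    [DecidablePred (· ∈ H)]
    (R : G ⧸ H → G) (hR : ∀ x, QuotientGroup.mk (R x) = x)
    (C : Set (RepOn G))
    (hCInd : ∀ P ∈ C, indRepOn H (resRepOn H P) ∈ C)
    (φ : ∀ P : RepOn G, P.V →ₗ[ℂ] P.V) (hφ : Commutes C φ) :
    (∀ P ∈ C,
      φ P = ∑ x : G ⧸ H,
        P.ρ (R x) ∘ₗ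
          (evalAt H (resR H P.ρ) 1 ∘ₗ indRep H (resR H P.ρ) (R x)⁻¹ ∘ₗ
            φ (indRepOn H (resRepOn H P)) ∘ₗ extAt H (resR H P.ρ) 1)) ∧
    (∀ σ : RepOn ↥H, indRepOn H σ ∈ C →
      φ (indRepOn H σ) =
        ∑ x : G ⧸ H, ∑ y : G ⧸ H,
          projAt H σ.ρ (R y * (R x)⁻¹) ∘ₗ φ (indRepOn H σ) ∘ₗ projAt H σ.ρ (R y)) := by
  refine ⟨fun P hP => ?_, fun σ _ => eq_sum_projAt_comp_comp_projAt H σ.ρ R hR _⟩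
  have hInd := hCInd P hP
  have hunit : toIndRes H P.ρ ∘ₗ φ P = φ (indRepOn H (resRepOn H P)) ∘ₗ toIndRes H P.ρ :=
    hφ P hP _ hInd (toIndRes H P.ρ) (toIndRes_comp H P.ρ)
  have hleft (g : G) : leftTranslate H P.ρ g ∘ₗ φ (indRepOn H (resRepOn H P)) =
      φ (indRepOn H (resRepOn H P)) ∘ₗ leftTranslate H P.ρ g :=
    hφ _ hInd _ hInd _ (leftTranslate_comp_indRep H P.ρ g)
  calc φ P = evalAt H (resR H P.ρ) 1 ∘ₗ toIndRes H P.ρ ∘ₗ φ P := by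
        rw [← LinearMap.comp_assoc, evalAt_comp_toIndRes, map_one]
        rfl
    _ = evalAt H (resR H P.ρ) 1 ∘ₗ φ (indRepOn H (resRepOn H P)) ∘ₗ toIndRes H P.ρ := by
        rw [hunit]
        rfl
    _ = _ := evalAt_one_comp_comp_toIndRes_eq_sum H P.ρ R hR _ hleft

set_option synthInstance.maxHeartbeats 1000000 in
set_option maxHeartbeats 1000000 in
/-- Let `H ◁ G` be of finite index.  For an endomorphism `φ` of the
forgetful functor on `C` and `g ∈ G`, set `φ_g = Inf_H^G (r_H^G (δ̂_{g⁻¹} φ))`, i.e.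
`φ_g(P) = e₁ ∘ (Ind_H^G (P|_H))(g⁻¹) ∘ φ(Ind_H^G (P|_H)) ∘ e₁^*`.  Then
`φ = ∑_{g ∈ G/H} δ̂_g φ_g` on `C` (where `C` is generated by the representations induced
from restrictions); in particular on any induced representation `Π = Ind_H^G σ` one has
`φ(Π) = ∑_{s,t ∈ G/H} p_{t s⁻¹} ∘ φ(Π) ∘ p_t`, which equals `φ(Π)` since `∑_g p_g = Id`. -/
theorem statement17 {G : Type u} [Group G] (H : Subgroup G) [H.Normal] [Fintype (G ⧸ H)]
    [DecidablePred (· ∈ H)]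
    (R : G ⧸ H → G) (hR : ∀ x, QuotientGroup.mk (R x) = x)
    (C : Set (RepOn G)) (hC : ClosedRep C)
    (hCInd : ∀ P ∈ C, indRepOn H (resRepOn H P) ∈ C)
    (hgen : ∀ C' : Set (RepOn G),
      (∀ P ∈ C, indRepOn H (resRepOn H P) ∈ C') → ClosedRep C' → C ⊆ C')
    (φ : ∀ P : RepOn G, P.V →ₗ[ℂ] P.V) (hφ : Commutes C φ) :
    (∀ P ∈ C,
      φ P = ∑ x : G ⧸ H,
        P.ρ (R x) ∘ₗ
          (evalAt H (resR H P.ρ) 1 ∘ₗ indRep H (resR H P.ρ) (R x)⁻¹ ∘ₗ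
            φ (indRepOn H (resRepOn H P)) ∘ₗ extAt H (resR H P.ρ) 1)) ∧
    (∀ σ : RepOn ↥H, indRepOn H σ ∈ C →
      φ (indRepOn H σ) =
        ∑ x : G ⧸ H, ∑ y : G ⧸ H,
          projAt H σ.ρ (R y * (R x)⁻¹) ∘ₗ φ (indRepOn H σ) ∘ₗ projAt H σ.ρ (R y)) :=
  statement17_general H R hR C hCInd φ hφ
end
end

section
/- Let G be a group, H ◁ G of finite index with G/H abelian. For an endomorphism φ of the forgetful functor on C, g ∈ G, and any Π ∈ C, the component φ_g of φ supported in gH is given by the finite Fourier-type formula φ_g(Π) = (1/|X_H|) Σ_{χ ∈ X_H} (χΠ)(g⁻¹) φ(χΠ), and one recovers φ via Σ_{g ∈ G/H} Π(g) φ_g(Π) = φ(Π). -/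
noncomputable section

open scoped TensorProduct DirectSum

universe u

section Aux

variable {G : Type u} [Group G] {H : Subgroup G}

lemma TrivOn.congr_mk (χ : TrivOn H) {u w : G}
    (h : (QuotientGroup.mk u : G ⧸ H) = QuotientGroup.mk w) : χ.1 u = χ.1 w := by
  have hm : u⁻¹ * w ∈ H := QuotientGroup.eq.mp h
  have h1 : χ.1 (u⁻¹ * w) = 1 := χ.2 _ hm
  rw [map_mul, map_inv] at h1
  exact (inv_mul_eq_one.mp h1)

/-- The trivial character in `TrivOn H`. -/
def TrivOn.one : TrivOn H := ⟨1, fun _ _ => rfl⟩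

lemma exists_trivOn_ne_one [H.Normal] [Fintype (G ⧸ H)]
    (hab : ∀ a b : G ⧸ H, a * b = b * a) {x : G} (hx : x ∉ H) :
    ∃ χ : TrivOn H, χ.1 x ≠ 1 := by
  letI : CommGroup (G ⧸ H) := { (inferInstance : Group (G ⧸ H)) with mul_comm := hab }
  have ha : (QuotientGroup.mk x : G ⧸ H) ≠ 1 := by
    simpa [QuotientGroup.eq_one_iff] using hx
  obtain ⟨ψ, hψ⟩ := CommGroup.exists_apply_ne_one_of_hasEnoughRootsOfUnity (G ⧸ H) ℂ ha
  refine ⟨⟨ψ.comp (QuotientGroup.mk' H), fun h hh => ?_⟩, hψ⟩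
  have h1 : (QuotientGroup.mk h : G ⧸ H) = 1 := (QuotientGroup.eq_one_iff h).mpr hh
  show ψ ((QuotientGroup.mk' H) h) = 1
  rw [QuotientGroup.mk'_apply, h1, map_one]

/-- The bijection between characters trivial on `H` and characters of `G ⧸ H`. -/
def trivOnEquiv (H : Subgroup G) [H.Normal] : TrivOn H ≃ ((G ⧸ H) →* ℂˣ) where
  toFun χ := QuotientGroup.lift H χ.1 (fun h hh => χ.2 h hh)
  invFun ψ := ⟨ψ.comp (QuotientGroup.mk' H), fun h hh => by
    have h1 : (QuotientGroup.mk h : G ⧸ H) = 1 := (QuotientGroup.eq_one_iff h).mpr hh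
    show ψ ((QuotientGroup.mk' H) h) = 1
    rw [QuotientGroup.mk'_apply, h1, map_one]⟩
  left_inv χ := by
    apply Subtype.ext; ext g; rfl
  right_inv ψ := by
    refine MonoidHom.ext (fun q => ?_)
    obtain ⟨g, rfl⟩ := QuotientGroup.mk_surjective q
    rfl

lemma card_trivOn (H : Subgroup G) [H.Normal] [Fintype (G ⧸ H)] [Fintype (TrivOn H)]
    (hab : ∀ a b : G ⧸ H, a * b = b * a) :
    Fintype.card (TrivOn H) = Fintype.card (G ⧸ H) := by
  letI : CommGroup (G ⧸ H) := { (inferInstance : Group (G ⧸ H)) with mul_comm := hab }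
  obtain ⟨e2⟩ := CommGroup.monoidHom_mulEquiv_of_hasEnoughRootsOfUnity (G ⧸ H) ℂ
  classical
  exact Fintype.card_congr ((trivOnEquiv H).trans e2.toEquiv)

lemma sum_trivOn_eq_zero [H.Normal] [Fintype (G ⧸ H)] [Fintype (TrivOn H)]
    (hab : ∀ a b : G ⧸ H, a * b = b * a) {x : G} (hx : x ∉ H) :
    ∑ χ : TrivOn H, ((χ.1 x : ℂˣ) : ℂ) = 0 := by
  obtain ⟨χ₀, hχ₀⟩ := exists_trivOn_ne_one hab hx
  let e : TrivOn H ≃ TrivOn H :=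
    { toFun := fun χ => ⟨χ₀.1 * χ.1, fun h hh => by simp [χ₀.2 h hh, χ.2 h hh]⟩
      invFun := fun χ => ⟨χ₀.1⁻¹ * χ.1, fun h hh => by simp [χ₀.2 h hh, χ.2 h hh]⟩
      left_inv := fun χ => by
        apply Subtype.ext
        refine MonoidHom.ext (fun a => ?_)
        show (χ₀.1 a)⁻¹ * (χ₀.1 a * χ.1 a) = χ.1 a
        exact inv_mul_cancel_left _ _
      right_inv := fun χ => by
        apply Subtype.ext
        refine MonoidHom.ext (fun a => ?_)
        show χ₀.1 a * ((χ₀.1 a)⁻¹ * χ.1 a) = χ.1 a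
        exact mul_inv_cancel_left _ _ }
  have key : ∑ χ : TrivOn H, ((χ₀.1 x : ℂ) * ((χ.1 x : ℂˣ) : ℂ)) =
      ∑ χ : TrivOn H, ((χ.1 x : ℂˣ) : ℂ) := by
    refine Fintype.sum_equiv e _ _ (fun χ => ?_)
    show (χ₀.1 x : ℂ) * (χ.1 x : ℂ) = (((χ₀.1 * χ.1) x : ℂˣ) : ℂ)
    rw [MonoidHom.mul_apply, Units.val_mul]
  rw [← Finset.mul_sum] at key
  have hne : ((χ₀.1 x : ℂˣ) : ℂ) ≠ 1 := fun hc => hχ₀ (Units.ext hc)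
  have := sub_eq_zero.mpr key
  rw [← sub_one_mul] at this
  rcases mul_eq_zero.mp this with h | h
  · exact absurd (sub_eq_zero.mp h) hne
  · exact h

lemma sum_quot_eq_zero (H : Subgroup G) [H.Normal] [Fintype (G ⧸ H)]
    (R : G ⧸ H → G) (hR : ∀ x, QuotientGroup.mk (R x) = x)
    {χ : TrivOn H} {g : G} (hg : χ.1 g ≠ 1) :
    ∑ x : G ⧸ H, ((χ.1 (R x)⁻¹ : ℂˣ) : ℂ) = 0 := by
  let e : G ⧸ H ≃ G ⧸ H := Equiv.mulLeft (QuotientGroup.mk g)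
  have key : ∑ x : G ⧸ H, ((χ.1 g : ℂ)⁻¹ * ((χ.1 (R x)⁻¹ : ℂˣ) : ℂ)) =
      ∑ x : G ⧸ H, ((χ.1 (R x)⁻¹ : ℂˣ) : ℂ) := by
    refine Fintype.sum_equiv e _ _ (fun x => ?_)
    have hmk : (QuotientGroup.mk (R (e x)) : G ⧸ H) = QuotientGroup.mk (g * R x) := by
      show (QuotientGroup.mk (R (QuotientGroup.mk g * x)) : G ⧸ H) = _
      rw [hR]
      rw [QuotientGroup.mk_mul, hR]
    have h2 : χ.1 (R (e x))⁻¹ = (χ.1 g)⁻¹ * χ.1 (R x)⁻¹ := by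
      rw [map_inv, TrivOn.congr_mk χ hmk, map_mul, mul_inv, map_inv]
    rw [h2, Units.val_mul, Units.val_inv_eq_inv_val]
  rw [← Finset.mul_sum] at key
  have hne : ((χ.1 g : ℂˣ) : ℂ)⁻¹ ≠ 1 := by
    simp only [ne_eq, inv_eq_one]
    exact fun hc => hg (Units.ext hc)
  have := sub_eq_zero.mpr key
  rw [← sub_one_mul] at this
  rcases mul_eq_zero.mp this with h | h
  · exact absurd (sub_eq_zero.mp h) (by simpa using hne)
  · exact h

variable (H)

/-- The `H`-equivariant section `v ↦ (x ↦ χ(x) • ρ(x) v)` of evaluation at `1`. -/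
def charSec (P : RepOn G) (χ : TrivOn H) :
    P.V →ₗ[ℂ] ↥(IndSpace H (resR H P.ρ)) where
  toFun v := ⟨fun x => ((χ.1 x : ℂˣ) : ℂ) • P.ρ x v, by
    intro h x
    have h1 : χ.1 ((h : G) * x) = χ.1 x := by
      rw [map_mul, χ.2 h h.2, one_mul]
    simp only [h1, map_mul, resR_apply, Module.End.mul_apply, map_smul]⟩
  map_add' a b := by apply Subtype.ext; funext x; simp
  map_smul' c a := by
    apply Subtype.ext; funext x
    simp [smul_comm c]

@[simp] lemma charSec_apply (P : RepOn G) (χ : TrivOn H) (v : P.V) (x : G) :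
    ((charSec H P χ v : ↥(IndSpace H (resR H P.ρ))) : G → P.V) x
      = ((χ.1 x : ℂˣ) : ℂ) • P.ρ x v := rfl

lemma charSec_comm (P : RepOn G) (χ : TrivOn H) (m : G) :
    (charSec H P χ) ∘ₗ (twistRepOn P χ).ρ m
      = (indRepOn H (resRepOn H P)).ρ m ∘ₗ (charSec H P χ) := by
  apply LinearMap.ext; intro v
  apply Subtype.ext; funext x
  show ((charSec H P χ (twist P.ρ χ.1 m v) : ↥(IndSpace H (resR H P.ρ))) : G → P.V) x
    = ((indRep H (resR H P.ρ) m (charSec H P χ v) : ↥(IndSpace H (resR H P.ρ))) : G → P.V) x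
  rw [indRep_apply, charSec_apply]
  erw [charSec_apply]
  erw [twist_apply, map_mul χ.1, Units.val_mul,
    map_mul P.ρ x m, Module.End.mul_apply, mul_smul, LinearMap.map_smul]

end Aux
set_option synthInstance.maxHeartbeats 1000000 in
set_option maxHeartbeats 1000000 in
/-- Let `H ◁ G` be of finite index with `G/H` abelian.  For an
endomorphism `φ` of the forgetful functor on `C` (stable under twists), `g ∈ G` and
`P ∈ C`, the component of `φ` supported in `gH` is given by the finite Fourier-type
formula `φ_g(P) = (1/|X_H|) ∑_{χ ∈ X_H} (χP)(g⁻¹) ∘ φ(χP)`, i.e. this formula agrees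
with `Inf_H^G (r_H^G (δ̂_{g⁻¹} φ))`, and one recovers `φ` via
`∑_{g ∈ G/H} P(g) ∘ φ_g(P) = φ(P)`. -/
theorem statement18 {G : Type u} [Group G] (H : Subgroup G) [H.Normal] [Fintype (G ⧸ H)]
    [Fintype (TrivOn H)] [DecidablePred (· ∈ H)]
    (hab : ∀ a b : G ⧸ H, a * b = b * a)
    (R : G ⧸ H → G) (hR : ∀ x, QuotientGroup.mk (R x) = x)
    (C : Set (RepOn G))
    (htwist : ∀ P ∈ C, ∀ χ : TrivOn H, twistRepOn P χ ∈ C)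
    (hCInd : ∀ P ∈ C, indRepOn H (resRepOn H P) ∈ C)
    (φ : ∀ P : RepOn G, P.V →ₗ[ℂ] P.V) (hφ : Commutes C φ) :
    (∀ P ∈ C, ∀ g : G,
      ((Fintype.card (TrivOn H) : ℂ))⁻¹ •
          ∑ χ : TrivOn H, (χ.1 g⁻¹ : ℂ) • (P.ρ g⁻¹ ∘ₗ φ (twistRepOn P χ)) =
        evalAt H (resR H P.ρ) 1 ∘ₗ indRep H (resR H P.ρ) g⁻¹ ∘ₗ
          φ (indRepOn H (resRepOn H P)) ∘ₗ extAt H (resR H P.ρ) 1) ∧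
    (∀ P ∈ C,
      ∑ x : G ⧸ H,
          ((Fintype.card (TrivOn H) : ℂ))⁻¹ •
            (P.ρ (R x) ∘ₗ
              ∑ χ : TrivOn H, (χ.1 (R x)⁻¹ : ℂ) • (P.ρ (R x)⁻¹ ∘ₗ φ (twistRepOn P χ))) =
        φ P) := by
  classical
  haveI : Nonempty (TrivOn H) := ⟨TrivOn.one⟩
  have hc0 : (Fintype.card (TrivOn H) : ℂ) ≠ 0 := Nat.cast_ne_zero.mpr Fintype.card_ne_zero
  have hPtriv : ∀ P : RepOn G, twistRepOn P (TrivOn.one : TrivOn H) = P := by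
    intro P
    show ({ V := P.V, ρ := twist P.ρ (1 : G →* ℂˣ) } : RepOn G) = P
    have h1 : twist P.ρ (1 : G →* ℂˣ) = P.ρ := by
      ext g v
      simp
    rw [h1]
  constructor
  · intro P hP g
    have hnat' : ∀ (χ : TrivOn H) (v : P.V),
        charSec H P χ (φ (twistRepOn P χ) v)
          = φ (indRepOn H (resRepOn H P)) (charSec H P χ v) := by
      intro χ v
      have h := hφ _ (htwist P hP χ) _ (hCInd P hP) (charSec H P χ) (charSec_comm H P χ)
      exact DFunLike.congr_fun h v
    have hE : extAt H (resR H P.ρ) 1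
        = (Fintype.card (TrivOn H) : ℂ)⁻¹ • ∑ χ : TrivOn H, charSec H P χ := by
      apply LinearMap.ext; intro v
      apply Subtype.ext; funext x
      have hrhs : (((((Fintype.card (TrivOn H) : ℂ)⁻¹ • ∑ χ : TrivOn H, charSec H P χ) v) :
            ↥(IndSpace H (resR H P.ρ))) : G → P.V) x
          = (Fintype.card (TrivOn H) : ℂ)⁻¹ •
              (∑ χ : TrivOn H, ((χ.1 x : ℂˣ) : ℂ)) • P.ρ x v := by
        simp only [LinearMap.smul_apply, LinearMap.sum_apply, SetLike.val_smul,
          AddSubmonoidClass.coe_finset_sum, Pi.smul_apply, Finset.sum_apply, charSec_apply,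
          Finset.sum_smul]
      rw [hrhs]
      show (if hx : x * 1⁻¹ ∈ H then (resR H P.ρ) ⟨x * 1⁻¹, hx⟩ v else 0) = _
      by_cases hx : x ∈ H
      · rw [dif_pos (by simpa using hx)]
        have hs : (∑ χ : TrivOn H, ((χ.1 x : ℂˣ) : ℂ)) = (Fintype.card (TrivOn H) : ℂ) := by
          rw [Finset.sum_congr rfl (fun χ _ => by rw [χ.2 x hx, Units.val_one])]
          simp
        rw [hs, smul_smul, inv_mul_cancel₀ hc0, one_smul]
        simp
      · rw [dif_neg (by simpa using hx)]
        rw [sum_trivOn_eq_zero hab hx, zero_smul, smul_zero]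
    apply LinearMap.ext; intro v
    simp only [LinearMap.comp_apply]
    rw [hE]
    have hw : φ (indRepOn H (resRepOn H P))
        (((Fintype.card (TrivOn H) : ℂ)⁻¹ • ∑ χ : TrivOn H, charSec H P χ) v)
        = (Fintype.card (TrivOn H) : ℂ)⁻¹ •
            ∑ χ : TrivOn H, charSec H P χ (φ (twistRepOn P χ) v) := by
      erw [LinearMap.smul_apply, LinearMap.sum_apply, map_smul, map_sum]
      congr 1
      exact Finset.sum_congr rfl (fun χ _ => (hnat' χ v).symm)
    erw [hw]
    have hterm : ∀ (χ : TrivOn H) (w : P.V),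
        evalAt H (resR H P.ρ) 1 (indRep H (resR H P.ρ) g⁻¹ (charSec H P χ w))
          = ((χ.1 g⁻¹ : ℂˣ) : ℂ) • P.ρ g⁻¹ w := by
      intro χ w
      rw [evalAt_apply, indRep_apply, one_mul, charSec_apply]
    rw [map_smul, map_sum, map_smul, map_sum]
    simp only [hterm, LinearMap.smul_apply, LinearMap.sum_apply, LinearMap.comp_apply]
    congr 1
    erw [LinearMap.sum_apply]
    refine Finset.sum_congr rfl (fun χ _ => ?_)
    exact (hterm χ _).symm
  · intro P hP
    have hcancel : ∀ (y : G) (w : P.V), P.ρ y (P.ρ y⁻¹ w) = w := by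
      intro y w
      rw [← Module.End.mul_apply, ← map_mul, mul_inv_cancel, map_one, Module.End.one_apply]
    have hT : ∀ χ : TrivOn H, (∑ x : G ⧸ H, ((χ.1 (R x)⁻¹ : ℂˣ) : ℂ))
        = if χ = TrivOn.one then (Fintype.card (G ⧸ H) : ℂ) else 0 := by
      intro χ
      by_cases h : χ = TrivOn.one
      · subst h
        rw [if_pos rfl]
        simp [TrivOn.one]
      · rw [if_neg h]
        have hex : ∃ g, χ.1 g ≠ 1 := by
          by_contra hc
          push_neg at hc
          exact h (Subtype.ext (MonoidHom.ext hc))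
        obtain ⟨g, hg⟩ := hex
        exact sum_quot_eq_zero H R hR hg
    apply LinearMap.ext; intro v
    simp only [LinearMap.sum_apply, LinearMap.smul_apply, LinearMap.comp_apply]
    have key : ∀ x : G ⧸ H,
        (Fintype.card (TrivOn H) : ℂ)⁻¹ •
          (P.ρ (R x)) ((∑ χ : TrivOn H, (χ.1 (R x)⁻¹ : ℂ) •
            (P.ρ (R x)⁻¹ ∘ₗ φ (twistRepOn P χ)) : P.V →ₗ[ℂ] P.V) v)
        = (Fintype.card (TrivOn H) : ℂ)⁻¹ •
            ∑ χ : TrivOn H, ((χ.1 (R x)⁻¹ : ℂˣ) : ℂ) • (φ (twistRepOn P χ)) v := by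
      intro x
      refine congrArg (fun w => (Fintype.card (TrivOn H) : ℂ)⁻¹ • w) ?_
      erw [LinearMap.sum_apply, map_sum]
      refine Finset.sum_congr rfl (fun χ _ => ?_)
      show P.ρ (R x) (((χ.1 (R x)⁻¹ : ℂˣ) : ℂ) • P.ρ (R x)⁻¹ (φ (twistRepOn P χ) v)) = _
      erw [map_smul, hcancel]
      rfl
    simp only [key]
    rw [← Finset.smul_sum]
    rw [show (∑ x : G ⧸ H, ∑ χ : TrivOn H,
          ((χ.1 (R x)⁻¹ : ℂˣ) : ℂ) • (φ (twistRepOn P χ)) v)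
        = ∑ χ : TrivOn H, ∑ x : G ⧸ H,
          ((χ.1 (R x)⁻¹ : ℂˣ) : ℂ) • (φ (twistRepOn P χ)) v from Finset.sum_comm]
    have e : ∀ χ : TrivOn H, ∑ x : G ⧸ H, ((χ.1 (R x)⁻¹ : ℂˣ) : ℂ) • (φ (twistRepOn P χ)) v
        = if χ = TrivOn.one then (Fintype.card (G ⧸ H) : ℂ) • (φ (twistRepOn P χ)) v else 0 := by
      intro χ
      rw [← Finset.sum_smul, hT χ, ite_smul, zero_smul]
    erw [Finset.sum_congr rfl (fun χ _ => e χ)]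
    erw [Finset.sum_ite_eq' Finset.univ (TrivOn.one : TrivOn H)]
    have h5 : LinearMap.id ∘ₗ φ (twistRepOn P (TrivOn.one : TrivOn H))
        = φ P ∘ₗ LinearMap.id := by
      refine hφ _ (htwist P hP TrivOn.one) P hP LinearMap.id (fun m => ?_)
      apply LinearMap.ext; intro w
      show (twist P.ρ (1 : G →* ℂˣ)) m w = P.ρ m w
      erw [twist_apply]
      show ((1 : ℂˣ) : ℂ) • P.ρ m w = P.ρ m w
      rw [Units.val_one, one_smul]
    have h6 : (φ (twistRepOn P (TrivOn.one : TrivOn H))) v = (φ P) v := by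
      have := DFunLike.congr_fun h5 v
      exact this
    erw [if_pos (Finset.mem_univ _), h6, ← card_trivOn H hab, smul_smul,
      inv_mul_cancel₀ hc0, one_smul]
end
end
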